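/- For t, α ≥ 0, μ > 0 and k ≥ 1, the function W_{α,k}(t) = 2 g'_{α,k}(t) t + g_{α,k}(t) (with g_{α,k}(t) = k(μ²+t)^α/(k+(μ²+t)^α)) satisfies |W'_{α,k}(t)| t ≤ |W'_{α,k}(t)|(μ² + t) ≤ 3(α + 1) W_{α,k}(t) for all t ≥ 0. -/

import Mathlib

/-!
Write `s = μ² + t` and `u = s^α`. Then `g' s = α g · k/(k+u)` and
`g'' s = g' · ((α-1)(k+u) - 2αu)/(k+u)`, whose second factors lie in `[0, 1]` and
`[-(α+1), α+1]` respectively (this is where `k ≥ 0` enters). Since `W' = 2g''t + 3g'` and `t ≤ s`,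
`|W'| s ≤ 2(α+1) g' t + 3α g ≤ 3(α+1) W`.
-/

open Real

/-- The smooth truncation `g_{α,k}(t) = k(μ²+t)^α / (k+(μ²+t)^α)`, `k` real. -/
noncomputable def gTrunc (μ α k : ℝ) : ℝ → ℝ :=
  fun t => k * (μ ^ 2 + t) ^ α / (k + (μ ^ 2 + t) ^ α)

/-- `W_{α,k}(t) = 2 g'_{α,k}(t) t + g_{α,k}(t)`. -/
noncomputable def WTrunc (μ α k : ℝ) : ℝ → ℝ :=
  fun t => 2 * deriv (gTrunc μ α k) t * t + gTrunc μ α k t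

noncomputable def gTruncDeriv (μ α k t : ℝ) : ℝ :=
  k ^ 2 * α * (μ ^ 2 + t) ^ α / ((μ ^ 2 + t) * (k + (μ ^ 2 + t) ^ α) ^ 2)

noncomputable def gTruncDeriv2 (μ α k t : ℝ) : ℝ :=
  k ^ 2 * α * (μ ^ 2 + t) ^ α * ((α - 1) * (k + (μ ^ 2 + t) ^ α) - 2 * α * (μ ^ 2 + t) ^ α) /
    ((μ ^ 2 + t) ^ 2 * (k + (μ ^ 2 + t) ^ α) ^ 3)

section

variable {μ α k t : ℝ}

lemma hasDerivAt_rpow_shift (α : ℝ) (hs : 0 < μ ^ 2 + t) :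
    HasDerivAt (fun y => (μ ^ 2 + y) ^ α) (α * (μ ^ 2 + t) ^ α / (μ ^ 2 + t)) t := by
  have h := ((hasDerivAt_id' t).const_add (μ ^ 2)).rpow_const (p := α) (Or.inl hs.ne')
  rw [rpow_sub_one hs.ne'] at h
  exact h.congr_deriv (by ring)

lemma hasDerivAt_gTrunc (hk : 0 ≤ k) (hs : 0 < μ ^ 2 + t) :
    HasDerivAt (gTrunc μ α k) (gTruncDeriv μ α k t) t := by
  have hD : 0 < k + (μ ^ 2 + t) ^ α := by positivity
  have hu := hasDerivAt_rpow_shift α hs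
  refine ((hu.const_mul k).div (hu.const_add k) hD.ne').congr_deriv ?_
  unfold gTruncDeriv
  field_simp
  ring

lemma hasDerivAt_gTruncDeriv (hk : 0 ≤ k) (hs : 0 < μ ^ 2 + t) :
    HasDerivAt (gTruncDeriv μ α k) (gTruncDeriv2 μ α k t) t := by
  have hD : 0 < k + (μ ^ 2 + t) ^ α := by positivity
  have hu := hasDerivAt_rpow_shift α hs
  have hden := ((hasDerivAt_id' t).const_add (μ ^ 2)).fun_mul ((hu.const_add k).fun_pow 2)
  refine ((hu.const_mul (k ^ 2 * α)).div hden (by positivity)).congr_deriv ?_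
  unfold gTruncDeriv2
  field_simp
  ring

lemma deriv_WTrunc (hk : 0 ≤ k) (hs : 0 < μ ^ 2 + t) :
    deriv (WTrunc μ α k) t = 2 * gTruncDeriv2 μ α k t * t + 3 * gTruncDeriv μ α k t := by
  have hW : HasDerivAt (fun y => 2 * gTruncDeriv μ α k y * y + gTrunc μ α k y)
      (2 * gTruncDeriv2 μ α k t * t + 3 * gTruncDeriv μ α k t) t := by
    refine ((((hasDerivAt_gTruncDeriv hk hs).const_mul 2).mul (hasDerivAt_id t)).add
      (hasDerivAt_gTrunc hk hs)).congr_deriv ?_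
    simp only [id_eq]
    ring
  refine (hW.congr_of_eventuallyEq ?_).deriv
  have hpos : ∀ᶠ y in nhds t, 0 < μ ^ 2 + y :=
    (continuous_const.add continuous_id).continuousAt.eventually (lt_mem_nhds hs)
  filter_upwards [hpos] with y hy
  simp only [WTrunc, (hasDerivAt_gTrunc hk hy).deriv]

lemma gTrunc_nonneg (hk : 0 ≤ k) (hs : 0 < μ ^ 2 + t) : 0 ≤ gTrunc μ α k t := by
  unfold gTrunc
  positivity

lemma gTruncDeriv_nonneg (hα : 0 ≤ α) (hk : 0 ≤ k) (hs : 0 < μ ^ 2 + t) :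
    0 ≤ gTruncDeriv μ α k t := by
  unfold gTruncDeriv
  positivity

lemma gTruncDeriv_mul_le (hα : 0 ≤ α) (hk : 0 ≤ k) (hs : 0 < μ ^ 2 + t) :
    gTruncDeriv μ α k t * (μ ^ 2 + t) ≤ α * gTrunc μ α k t := by
  set u := (μ ^ 2 + t) ^ α with hu_def
  have hu : 0 < u := by positivity
  have hD : 0 < k + u := by positivity
  have hfactor : gTruncDeriv μ α k t * (μ ^ 2 + t) = α * gTrunc μ α k t * (k / (k + u)) := by
    unfold gTruncDeriv gTrunc
    rw [← hu_def]
    field_simp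
  rw [hfactor]
  refine mul_le_of_le_one_right (mul_nonneg hα (gTrunc_nonneg hk hs)) ?_
  rw [div_le_one hD]
  linarith

lemma abs_gTruncDeriv2_mul_le (hα : 0 ≤ α) (hk : 0 ≤ k) (hs : 0 < μ ^ 2 + t) :
    |gTruncDeriv2 μ α k t| * (μ ^ 2 + t) ≤ (α + 1) * gTruncDeriv μ α k t := by
  set u := (μ ^ 2 + t) ^ α with hu_def
  have hu : 0 < u := by positivity
  have hD : 0 < k + u := by positivity
  have hfactor : gTruncDeriv2 μ α k t * (μ ^ 2 + t) =
      gTruncDeriv μ α k t * (((α - 1) * (k + u) - 2 * α * u) / (k + u)) := by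
    unfold gTruncDeriv2 gTruncDeriv
    rw [← hu_def]
    field_simp
  have hratio : |((α - 1) * (k + u) - 2 * α * u) / (k + u)| ≤ α + 1 := by
    rw [abs_div, abs_of_pos hD, div_le_iff₀ hD, abs_le]
    constructor <;> nlinarith [mul_nonneg hα hk, mul_nonneg hα hu.le]
  rw [← abs_of_pos hs, ← abs_mul, hfactor, abs_mul, abs_of_nonneg (gTruncDeriv_nonneg hα hk hs),
    mul_comm (α + 1)]
  exact mul_le_mul_of_nonneg_left hratio (gTruncDeriv_nonneg hα hk hs)

lemma abs_deriv_WTrunc_mul_le (hα : 0 ≤ α) (hk : 0 ≤ k) (ht : 0 ≤ t) (hs : 0 < μ ^ 2 + t) :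
    |deriv (WTrunc μ α k) t| * (μ ^ 2 + t) ≤ 3 * (α + 1) * WTrunc μ α k t := by
  set s := μ ^ 2 + t
  have hg := gTrunc_nonneg (α := α) hk hs
  have hg' := gTruncDeriv_nonneg hα hk hs
  have h1 := gTruncDeriv_mul_le hα hk hs
  have h2 := abs_gTruncDeriv2_mul_le hα hk hs
  have hW : WTrunc μ α k t = 2 * gTruncDeriv μ α k t * t + gTrunc μ α k t := by
    simp only [WTrunc, (hasDerivAt_gTrunc hk hs).deriv]
  rw [deriv_WTrunc hk hs, hW]
  calc |2 * gTruncDeriv2 μ α k t * t + 3 * gTruncDeriv μ α k t| * s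
      ≤ (2 * |gTruncDeriv2 μ α k t| * t + 3 * gTruncDeriv μ α k t) * s := by
        refine mul_le_mul_of_nonneg_right ?_ hs.le
        refine (abs_add_le _ _).trans_eq ?_
        rw [abs_mul, abs_mul, abs_mul, abs_of_nonneg ht, abs_of_nonneg hg']
        norm_num
    _ = 2 * (|gTruncDeriv2 μ α k t| * s) * t + 3 * (gTruncDeriv μ α k t * s) := by ring
    _ ≤ 2 * ((α + 1) * gTruncDeriv μ α k t) * t + 3 * (α * gTrunc μ α k t) := by gcongr
    _ ≤ 3 * (α + 1) * (2 * gTruncDeriv μ α k t * t + gTrunc μ α k t) := by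
        nlinarith [mul_nonneg (mul_nonneg hα hg') ht, mul_nonneg hg' ht]

end

/-- For `t, α ≥ 0`, `μ > 0`, `k ≥ 1`:
`|W'_{α,k}(t)| t ≤ |W'_{α,k}(t)|(μ²+t) ≤ 3(α+1) W_{α,k}(t)`. -/
theorem stmt8 (μ α k : ℝ) (hμ : 0 < μ) (hα : 0 ≤ α) (hk : 1 ≤ k) :
    ∀ t : ℝ, 0 ≤ t →
      |deriv (WTrunc μ α k) t| * t ≤ |deriv (WTrunc μ α k) t| * (μ ^ 2 + t) ∧
        |deriv (WTrunc μ α k) t| * (μ ^ 2 + t) ≤ 3 * (α + 1) * WTrunc μ α k t := by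
  intro t ht
  have hs : 0 < μ ^ 2 + t := by positivity
  refine ⟨mul_le_mul_of_nonneg_left (by nlinarith) (abs_nonneg _), ?_⟩
  exact abs_deriv_WTrunc_mul_le hα (by linarith) ht hs
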